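/- Polynomial-size domain property over expanding domains: let φ be a one-variable first-order modal formula with counting quantifiers, and set n = |sub(φ)|, m = md(φ), C = cpt(φ). If φ is satisfiable with respect to QK^exp, then φ is satisfiable in an expanding domain model M = (W,R,D,d,I) whose frame (W,R) is an irreflexive intransitive tree of depth ≤ m and in which |d(w)| ≤ n·(m+1)·(C+1) + 1 for every w ∈ W (a bound polynomial in n, m, and C). -/

import Mathlib

/-! Syntax of one-variable first-order modal formulas with counting quantifiers:
    φ ::= P(x) | ¬φ | (φ∧φ) | ◇φ | ∃[≤c]x φ. -/

inductive Fml : Type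
  | atom : ℕ → Fml
  | neg : Fml → Fml
  | conj : Fml → Fml → Fml
  | dia : Fml → Fml
  | countLe : ℕ → Fml → Fml
deriving DecidableEq

namespace Fml

/-- Subformulas. -/
def sub : Fml → Finset Fml
  | atom n => {atom n}
  | neg ψ => insert (neg ψ) ψ.sub
  | conj ψ χ => insert (conj ψ χ) (ψ.sub ∪ χ.sub)
  | dia ψ => insert (dia ψ) ψ.sub
  | countLe c ψ => insert (countLe c ψ) ψ.sub

/-- Modal depth. -/
def md : Fml → ℕ
  | atom _ => 0
  | neg ψ => ψ.md
  | conj ψ χ => max ψ.md χ.md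
  | dia ψ => ψ.md + 1
  | countLe _ ψ => ψ.md

/-- Capacity: the largest counting-quantifier subscript (0 if none). -/
def cpt : Fml → ℕ
  | atom _ => 0
  | neg ψ => ψ.cpt
  | conj ψ χ => max ψ.cpt χ.cpt
  | dia ψ => ψ.cpt
  | countLe c ψ => max c ψ.cpt

/-- Length of the formula as a string, counting subscripts written in binary. -/
def len : Fml → ℕ
  | atom _ => 1
  | neg ψ => ψ.len + 1
  | conj ψ χ => ψ.len + χ.len + 1
  | dia ψ => ψ.len + 1
  | countLe c ψ => ψ.len + Nat.size c + 1

/-- Predicate symbols occurring in a formula. -/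
def preds : Fml → Finset ℕ
  | atom n => {n}
  | neg ψ => ψ.preds
  | conj ψ χ => ψ.preds ∪ χ.preds
  | dia ψ => ψ.preds
  | countLe _ ψ => ψ.preds

def imp (ψ χ : Fml) : Fml := neg (conj ψ (neg χ))
def or (ψ χ : Fml) : Fml := neg (conj (neg ψ) (neg χ))
def iff (ψ χ : Fml) : Fml := conj (ψ.imp χ) (χ.imp ψ)
def box (ψ : Fml) : Fml := neg (dia (neg ψ))
/-- `∃x ψ := ¬∃[≤0]x ψ`. -/
def ex (ψ : Fml) : Fml := neg (countLe 0 ψ)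
/-- `∀x ψ := ∃[≤0]x ¬ψ`. -/
def fal (ψ : Fml) : Fml := countLe 0 (neg ψ)
/-- A tautology. -/
def top : Fml := neg (conj (atom 0) (neg (atom 0)))

/-- `boxIter n ψ` is `□^n ψ`. -/
def boxIter : ℕ → Fml → Fml
  | 0, ψ => ψ
  | n+1, ψ => (boxIter n ψ).box

/-- `boxLe m ψ` is `⋀_{k=0}^{m} □^k ψ`. -/
def boxLe : ℕ → Fml → Fml
  | 0, ψ => ψ
  | n+1, ψ => conj (boxLe n ψ) (boxIter (n+1) ψ)

end Fml

/-- A first-order Kripke model `M = (W,R,D,d,I)` (unary predicates suffice for the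
one-variable fragment). -/
structure KModel where
  W : Type
  R : W → W → Prop
  D : Type
  Dne : Nonempty D
  dom : W → Set D
  domNe : ∀ w, (dom w).Nonempty
  I : W → ℕ → Set D
  Isub : ∀ w p, I w p ⊆ dom w

/-- Satisfaction `M,w ⊨^a φ`. -/
def KModel.sat (M : KModel) : Fml → M.W → M.D → Prop
  | .atom p, w, a => a ∈ M.I w p
  | .neg ψ, w, a => ¬ M.sat ψ w a
  | .conj ψ χ, w, a => M.sat ψ w a ∧ M.sat χ w a
  | .dia ψ, w, a => ∃ v, M.R w v ∧ M.sat ψ v a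
  | .countLe c ψ, w, _ => {b | b ∈ M.dom w ∧ M.sat ψ w b}.encard ≤ (c : ℕ∞)

def KModel.constDom (M : KModel) : Prop := ∀ u v, M.dom u = M.dom v
def KModel.expDom (M : KModel) : Prop := ∀ u v, M.R u v → M.dom u ⊆ M.dom v
def KModel.decDom (M : KModel) : Prop := ∀ u v, M.R u v → M.dom v ⊆ M.dom u

/-- Satisfiability with respect to QK (constant domains). -/
def satQK (φ : Fml) : Prop :=
  ∃ M : KModel, M.constDom ∧ ∃ w a, a ∈ M.dom w ∧ M.sat φ w a

/-- Satisfiability with respect to QK^exp (expanding domains). -/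
def satQKexp (φ : Fml) : Prop :=
  ∃ M : KModel, M.expDom ∧ ∃ w a, a ∈ M.dom w ∧ M.sat φ w a

/-- Satisfiability with respect to QK^dec (decreasing domains). -/
def satQKdec (φ : Fml) : Prop :=
  ∃ M : KModel, M.decDom ∧ ∃ w a, a ∈ M.dom w ∧ M.sat φ w a

/-- `R` is the immediate-successor (parent–child) relation of a rooted irreflexive
intransitive tree of depth ≤ m with root `r`. -/
def IsTreeOfDepth {W : Type} (R : W → W → Prop) (r : W) (m : ℕ) : Prop :=
  ∃ depth : W → ℕ,
    depth r = 0 ∧ (∀ w, depth w ≤ m) ∧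
    (∀ u v, R u v → depth v = depth u + 1) ∧
    (∀ v, v ≠ r → ∃! u, R u v) ∧
    (∀ v, Relation.ReflTransGen R r v)

/-! Unravel a model of `φ` at `w₀` into paths of length at most `m = md(φ)`; this is a tree on
which `φ` keeps its truth value. At every world `u` of `M` choose, for each `ψ ∈ sub(φ)`, at most
`cpt(φ) + 1` elements satisfying `ψ` at `u`; the domain at a path is the set of elements chosen at
the worlds on it. Domains then grow along the tree, have at most `(m + 1)·|sub(φ)|·(cpt(φ) + 1)`
elements besides the initial one, and still decide every counting quantifier `∃[≤c]` with
`c ≤ cpt(φ)`: if more than `c` elements satisfy `ψ` at `u`, then `c + 1` of them were chosen. -/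

lemma Fml.mem_sub_self (φ : Fml) : φ ∈ φ.sub := by
  cases φ <;> simp [Fml.sub]

lemma Finset.set_encard_biUnion_le_card_mul {ι α : Type*} (t : Finset ι) (s : ι → Set α)
    {c : ℕ∞} (h : ∀ i ∈ t, (s i).encard ≤ c) : (⋃ i ∈ t, s i).encard ≤ t.card * c :=
  (t.set_encard_biUnion_le s).trans <| (t.sum_le_card_nsmul _ c h).trans_eq (nsmul_eq_mul _ _)

lemma List.set_encard_biUnion_le_length_mul {ι α : Type*} (l : List ι) (s : ι → Set α)
    {c : ℕ∞} (h : ∀ i ∈ l, (s i).encard ≤ c) : (⋃ i ∈ l, s i).encard ≤ l.length * c := by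
  classical
  have hl : (⋃ i ∈ l, s i) = ⋃ i ∈ l.toFinset, s i := by simp only [List.mem_toFinset]
  rw [hl]
  refine (l.toFinset.set_encard_biUnion_le_card_mul s fun i hi => h i ?_).trans ?_
  · exact List.mem_toFinset.mp hi
  · gcongr
    exact_mod_cast l.toFinset_card_le

lemma encard_inter_le_iff_of_min_le {α : Type*} {A B S : Set α} {c C : ℕ} (hc : c ≤ C)
    (hS : S ⊆ A ∩ B) (hS_card : min A.encard (C + 1) ≤ S.encard) :
    (A ∩ B).encard ≤ c ↔ A.encard ≤ c := by
  refine ⟨fun h => ?_, fun h => (Set.encard_mono Set.inter_subset_left).trans h⟩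
  by_contra hA
  have hmin : (c : ℕ∞) + 1 ≤ min A.encard (C + 1) :=
    le_min (Order.add_one_le_of_lt (not_le.mp hA)) (by exact_mod_cast Nat.succ_le_succ hc)
  have : c + 1 ≤ c := by
    exact_mod_cast hmin.trans (hS_card.trans ((Set.encard_mono hS).trans h))
  omega

namespace KModel

variable (M : KModel)

def extension (ψ : Fml) (w : M.W) : Set M.D := {b | b ∈ M.dom w ∧ M.sat ψ w b}

noncomputable def witnesses (C : ℕ) (ψ : Fml) (w : M.W) : Set M.D :=
  (Set.exists_subset_encard_eq (min_le_left (M.extension ψ w).encard (C + 1))).choose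

lemma witnesses_subset_extension (C : ℕ) (ψ : Fml) (w : M.W) :
    M.witnesses C ψ w ⊆ M.extension ψ w :=
  (Set.exists_subset_encard_eq (min_le_left (M.extension ψ w).encard (C + 1))).choose_spec.1

lemma encard_witnesses (C : ℕ) (ψ : Fml) (w : M.W) :
    (M.witnesses C ψ w).encard = min (M.extension ψ w).encard (C + 1) :=
  (Set.exists_subset_encard_eq (min_le_left (M.extension ψ w).encard (C + 1))).choose_spec.2

/-- A path `w₀ R ⋯ R cur` of length at most `m`; `anc` lists the earlier worlds, nearest first. -/
@[ext]
structure Path (w₀ : M.W) (m : ℕ) where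
  cur : M.W
  anc : List M.W
  isChain : (cur :: anc).IsChain (fun u v => M.R v u)
  getLast_eq : (cur :: anc).getLast (List.cons_ne_nil _ _) = w₀
  length_anc_le : anc.length ≤ m

namespace Path

variable {M} {w₀ : M.W} {m : ℕ}

def worlds (p : M.Path w₀ m) : List M.W := p.cur :: p.anc

def Child (p q : M.Path w₀ m) : Prop := q.anc = p.worlds

def root : M.Path w₀ m := ⟨w₀, [], .singleton _, rfl, Nat.zero_le _⟩

lemma start_mem_worlds (p : M.Path w₀ m) : w₀ ∈ p.worlds := by
  have h := List.getLast_mem (List.cons_ne_nil p.cur p.anc)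
  rwa [p.getLast_eq] at h

lemma dom_subset_dom_cur (hexp : M.expDom) (p : M.Path w₀ m) {u : M.W} (hu : u ∈ p.worlds) :
    M.dom u ⊆ M.dom p.cur :=
  List.IsChain.induction (fun u => M.dom u ⊆ M.dom p.cur) _ p.isChain
    (fun _ _ hR h => (hexp _ _ hR).trans h) (fun _ => subset_rfl) u hu

lemma Child.worlds_subset {p q : M.Path w₀ m} (h : p.Child q) : p.worlds ⊆ q.worlds := by
  intro u hu
  show u ∈ q.cur :: q.anc
  rw [h]
  exact List.mem_cons_of_mem _ hu

lemma Child.rel {p q : M.Path w₀ m} (h : p.Child q) : M.R p.cur q.cur := by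
  have hq := q.isChain
  rw [h, worlds, List.isChain_cons_cons] at hq
  exact hq.1

lemma Child.length_anc {p q : M.Path w₀ m} (h : p.Child q) :
    q.anc.length = p.anc.length + 1 := by
  rw [h, worlds, List.length_cons]

lemma Child.unique {p p' q : M.Path w₀ m} (h : p.Child q) (h' : p'.Child q) : p = p' := by
  have hw : p.worlds = p'.worlds := h.symm.trans h'
  exact Path.ext (List.cons.inj hw).1 (List.cons.inj hw).2

lemma exists_child (p : M.Path w₀ m) (hp : p.anc.length < m) {v : M.W} (hR : M.R p.cur v) :
    ∃ q : M.Path w₀ m, p.Child q ∧ q.cur = v :=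
  ⟨⟨v, p.worlds, List.isChain_cons_cons.mpr ⟨hR, p.isChain⟩,
    List.getLast_cons_cons.trans p.getLast_eq, by rw [worlds, List.length_cons]; omega⟩,
    rfl, rfl⟩

lemma eq_root_or_exists_child (q : M.Path w₀ m) : q = root ∨ ∃ p : M.Path w₀ m, p.Child q := by
  obtain ⟨v, _ | ⟨u, anc⟩, hchain, hlast, hlen⟩ := q
  · left
    simp only [List.getLast_singleton] at hlast
    subst hlast
    rfl
  · right
    refine ⟨⟨u, anc, (List.isChain_cons_cons.mp hchain).2,
      List.getLast_cons_cons.symm.trans hlast, ?_⟩, rfl⟩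
    rw [List.length_cons] at hlen
    omega

lemma root_reflTransGen (q : M.Path w₀ m) : Relation.ReflTransGen Child root q := by
  induction hn : q.anc.length generalizing q with
  | zero =>
    rcases q.eq_root_or_exists_child with rfl | ⟨p, hp⟩
    · exact .refl
    · have := hp.length_anc
      omega
  | succ n ih =>
    rcases q.eq_root_or_exists_child with rfl | ⟨p, hp⟩
    · exact .refl
    · exact (ih p (by have := hp.length_anc; omega)).tail hp

lemma isTreeOfDepth : IsTreeOfDepth (Child (w₀ := w₀) (m := m)) root m := by
  refine ⟨fun p => p.anc.length, rfl, length_anc_le, fun _ _ h => h.length_anc, fun q hq => ?_,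
    root_reflTransGen⟩
  obtain ⟨p, hp⟩ := q.eq_root_or_exists_child.resolve_left hq
  exact ⟨p, hp, fun p' hp' => hp'.unique hp⟩

end Path

section Unravel

variable {M} {w₀ : M.W} {m : ℕ} (a₀ : M.D) (Γ : Finset Fml) (C : ℕ)

def unravelDom (p : M.Path w₀ m) : Set M.D :=
  insert a₀ (⋃ u ∈ p.worlds, ⋃ ψ ∈ Γ, M.witnesses C ψ u)

variable (M w₀ m) in
noncomputable def unravel : KModel where
  W := M.Path w₀ m
  R := Path.Child
  D := M.D
  Dne := ⟨a₀⟩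
  dom := unravelDom a₀ Γ C
  domNe _ := ⟨a₀, Set.mem_insert _ _⟩
  I p P := M.I p.cur P ∩ unravelDom a₀ Γ C p
  Isub _ _ := Set.inter_subset_right

lemma unravel_expDom : (M.unravel w₀ m a₀ Γ C).expDom :=
  fun _ _ hpq => Set.insert_subset_insert (Set.biUnion_subset_biUnion_left hpq.worlds_subset)

lemma unravelDom_subset_dom (hexp : M.expDom) (ha₀ : a₀ ∈ M.dom w₀) (p : M.Path w₀ m) :
    unravelDom a₀ Γ C p ⊆ M.dom p.cur := by
  rintro b (rfl | hb)
  · exact p.dom_subset_dom_cur hexp p.start_mem_worlds ha₀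
  · simp only [Set.mem_iUnion] at hb
    obtain ⟨u, hu, ψ, -, hb⟩ := hb
    exact p.dom_subset_dom_cur hexp hu (M.witnesses_subset_extension C ψ u hb).1

lemma witnesses_cur_subset_unravelDom {ψ : Fml} (hψ : ψ ∈ Γ) (p : M.Path w₀ m) :
    M.witnesses C ψ p.cur ⊆ unravelDom a₀ Γ C p :=
  fun _ hb => Set.mem_insert_of_mem _ <|
    Set.mem_biUnion List.mem_cons_self (Set.mem_biUnion hψ hb)

lemma encard_unravelDom_le (p : M.Path w₀ m) :
    (unravelDom a₀ Γ C p).encard ≤ ((Γ.card * (m + 1) * (C + 1) + 1 : ℕ) : ℕ∞) := by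
  have hΓ (u : M.W) : (⋃ ψ ∈ Γ, M.witnesses C ψ u).encard ≤ Γ.card * (C + 1) :=
    Γ.set_encard_biUnion_le_card_mul _ fun ψ _ =>
      (M.encard_witnesses C ψ u).trans_le (min_le_right _ _)
  have hlen : (p.worlds.length : ℕ∞) ≤ m + 1 := by
    exact_mod_cast Nat.succ_le_succ p.length_anc_le
  calc (unravelDom a₀ Γ C p).encard
      ≤ p.worlds.length * (Γ.card * (C + 1)) + 1 :=
        (Set.encard_insert_le _ _).trans
          (add_le_add_left (p.worlds.set_encard_biUnion_le_length_mul _ fun u _ => hΓ u) _)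
    _ ≤ (m + 1) * (Γ.card * (C + 1)) + 1 := by gcongr
    _ = ((Γ.card * (m + 1) * (C + 1) + 1 : ℕ) : ℕ∞) := by push_cast; ring

theorem sat_unravel_iff (hexp : M.expDom) (ha₀ : a₀ ∈ M.dom w₀) (ψ : Fml) (hΓ : ψ.sub ⊆ Γ)
    (hC : ψ.cpt ≤ C) (p : M.Path w₀ m) (hmd : ψ.md + p.anc.length ≤ m) {a : M.D}
    (ha : a ∈ unravelDom a₀ Γ C p) :
    (M.unravel w₀ m a₀ Γ C).sat ψ p a ↔ M.sat ψ p.cur a := by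
  induction ψ generalizing p a with
  | atom P => exact ⟨And.left, fun h => ⟨h, ha⟩⟩
  | neg χ ih =>
    simp only [Fml.sub, Finset.insert_subset_iff] at hΓ
    exact not_congr (ih hΓ.2 hC p hmd ha)
  | conj χ₁ χ₂ ih₁ ih₂ =>
    simp only [Fml.sub, Fml.cpt, Fml.md, Finset.insert_subset_iff, Finset.union_subset_iff,
      max_le_iff] at hΓ hC hmd
    exact and_congr (ih₁ hΓ.2.1 hC.1 p (by omega) ha) (ih₂ hΓ.2.2 hC.2 p (by omega) ha)
  | dia χ ih =>
    simp only [Fml.sub, Fml.cpt, Fml.md, Finset.insert_subset_iff] at hΓ hC hmd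
    constructor
    · rintro ⟨q, hpq, hq⟩
      have := hpq.length_anc
      exact ⟨q.cur, hpq.rel,
        (ih hΓ.2 hC q (by omega) (unravel_expDom a₀ Γ C p q hpq ha)).1 hq⟩
    · rintro ⟨v, hR, hv⟩
      obtain ⟨q, hpq, rfl⟩ := p.exists_child (by omega) hR
      have := hpq.length_anc
      exact ⟨q, hpq, (ih hΓ.2 hC q (by omega) (unravel_expDom a₀ Γ C p q hpq ha)).2 hv⟩
  | countLe c χ ih =>
    simp only [Fml.sub, Fml.cpt, Fml.md, Finset.insert_subset_iff, max_le_iff] at hΓ hC hmd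
    have hext : (M.unravel w₀ m a₀ Γ C).extension χ p
        = M.extension χ p.cur ∩ unravelDom a₀ Γ C p := by
      ext b
      constructor
      · rintro ⟨hb, hsat⟩
        exact ⟨⟨unravelDom_subset_dom a₀ Γ C hexp ha₀ p hb, (ih hΓ.2 hC.2 p hmd hb).1 hsat⟩, hb⟩
      · rintro ⟨⟨-, hsat⟩, hb⟩
        exact ⟨hb, (ih hΓ.2 hC.2 p hmd hb).2 hsat⟩
    change ((M.unravel w₀ m a₀ Γ C).extension χ p).encard ≤ c ↔
      (M.extension χ p.cur).encard ≤ c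
    rw [hext]
    exact encard_inter_le_iff_of_min_le hC.1
      (Set.subset_inter (M.witnesses_subset_extension C χ p.cur)
        (witnesses_cur_subset_unravelDom a₀ Γ C (hΓ.2 χ.mem_sub_self) p))
      (M.encard_witnesses C χ p.cur).ge

end Unravel

end KModel

/-- polynomial-size domain property over expanding domains: if φ is
satisfiable with respect to QK^exp, then it is satisfiable in an expanding domain
tree-model of depth ≤ md(φ) in which every domain has at most
`|sub(φ)|·(md(φ)+1)·(cpt(φ)+1) + 1` elements. -/
theorem stmt_9 (φ : Fml) (h : satQKexp φ) :
    ∃ (M : KModel) (root : M.W), M.expDom ∧ IsTreeOfDepth M.R root φ.md ∧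
      (∀ w, (M.dom w).encard ≤
        ((φ.sub.card * (φ.md + 1) * (φ.cpt + 1) + 1 : ℕ) : ℕ∞)) ∧
      ∃ w a, a ∈ M.dom w ∧ M.sat φ w a := by
  obtain ⟨M, hexp, w₀, a₀, ha₀, hsat⟩ := h
  have ha₀_root : a₀ ∈ KModel.unravelDom a₀ φ.sub φ.cpt (KModel.Path.root : M.Path w₀ φ.md) :=
    Set.mem_insert _ _
  refine ⟨M.unravel w₀ φ.md a₀ φ.sub φ.cpt, .root, KModel.unravel_expDom a₀ φ.sub φ.cpt,
    KModel.Path.isTreeOfDepth, KModel.encard_unravelDom_le a₀ φ.sub φ.cpt, .root, a₀, ha₀_root,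
    ?_⟩
  exact (KModel.sat_unravel_iff a₀ φ.sub φ.cpt hexp ha₀ φ subset_rfl le_rfl .root
    (by simp [KModel.Path.root]) ha₀_root).2 hsat
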